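/- arXiv:2301.12237 — 3 statements merged into one kernel-verified Lean document; each statement's English description precedes it below -/
import Mathlib

section
/- Let N ∈ ℕ, T > 0, let E : ℝ^N → ℝ be continuously differentiable, and let x : [0,T] → ℝ^N be continuously differentiable and satisfy De Giorgi's optimal energy dissipation inequality E(x(T)) + (1/2)·∫₀^T ( |x'(t)|² + |∇E(x(t))|² ) dt ≤ E(x(0)). Then x is a gradient flow of E, i.e. x'(t) = −∇E(x(t)) for every t ∈ [0,T]. -/
/-!
Along any C¹ curve `γ`, the chain rule and the fundamental theorem of calculus give
`E(γ b) - E(γ a) = ∫ ⟪∇E(γ), γ'⟫`, so completing the square turns De Giorgi's inequality into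
`∫ ‖γ' + ∇E(γ)‖² ≤ 0`. The integrand is continuous and nonnegative, hence vanishes on `[a, b]`.
-/

open MeasureTheory Set
open scoped Gradient RealInnerProductSpace

theorem eqOn_zero_of_intervalIntegral_nonpos {f : ℝ → ℝ} {a b : ℝ} (hab : a < b)
    (hf : ContinuousOn f (Icc a b)) (hf₀ : ∀ t ∈ Icc a b, 0 ≤ f t)
    (hint : ∫ t in a..b, f t ≤ 0) : EqOn f 0 (Icc a b) := by
  have hzero : ∫ t in a..b, f t = 0 :=
    le_antisymm hint (intervalIntegral.integral_nonneg hab.le hf₀)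
  rw [intervalIntegral.integral_eq_zero_iff_of_le_of_nonneg_ae hab.le
    (ae_restrict_of_forall_mem measurableSet_Ioc fun t ht => hf₀ t (Ioc_subset_Icc_self ht))
    (hf.intervalIntegrable_of_Icc hab.le), Measure.restrict_congr_set Ioc_ae_eq_Icc] at hzero
  refine Measure.eqOn_of_ae_eq hzero hf continuousOn_const ?_
  rw [interior_Icc, closure_Ioo hab.ne]

section GradientAlongCurve

variable {F : Type*} [NormedAddCommGroup F] [InnerProductSpace ℝ F] [CompleteSpace F]
  {f : F → ℝ} {γ γ' : ℝ → F} {a b : ℝ}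

theorem ContDiff.continuous_gradient (hf : ContDiff ℝ 1 f) : Continuous (∇ f) :=
  (InnerProductSpace.toDual ℝ F).symm.continuous.comp (hf.continuous_fderiv one_ne_zero)

theorem HasGradientAt.comp_hasDerivAt {g v : F} {t : ℝ} (hf : HasGradientAt f g (γ t))
    (hγ : HasDerivAt γ v t) : HasDerivAt (f ∘ γ) ⟪g, v⟫ t := by
  simpa using hf.hasFDerivAt.comp_hasDerivAt t hγ

theorem continuousOn_gradient_comp (hf : ContDiff ℝ 1 f)
    (hγ : ∀ t ∈ Icc a b, HasDerivAt γ (γ' t) t) : ContinuousOn (fun t => ∇ f (γ t)) (Icc a b) :=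
  hf.continuous_gradient.comp_continuousOn fun t ht => (hγ t ht).continuousAt.continuousWithinAt

theorem integral_inner_gradient_eq_sub (hf : ContDiff ℝ 1 f) (hab : a ≤ b)
    (hγ : ∀ t ∈ Icc a b, HasDerivAt γ (γ' t) t) (hγ' : ContinuousOn γ' (Icc a b)) :
    ∫ t in a..b, ⟪∇ f (γ t), γ' t⟫ = f (γ b) - f (γ a) := by
  have hcont : ContinuousOn (fun t => ⟪∇ f (γ t), γ' t⟫) (Icc a b) :=
    (continuousOn_gradient_comp hf hγ).inner hγ'
  rw [← uIcc_of_le hab] at hγ hcont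
  exact intervalIntegral.integral_eq_sub_of_hasDerivAt
    (fun t ht => ((hf.differentiable one_ne_zero _).hasGradientAt).comp_hasDerivAt (hγ t ht))
    hcont.intervalIntegrable

theorem integral_norm_add_gradient_sq (hf : ContDiff ℝ 1 f) (hab : a ≤ b)
    (hγ : ∀ t ∈ Icc a b, HasDerivAt γ (γ' t) t) (hγ' : ContinuousOn γ' (Icc a b)) :
    ∫ t in a..b, ‖γ' t + ∇ f (γ t)‖ ^ 2 =
      (∫ t in a..b, (‖γ' t‖ ^ 2 + ‖∇ f (γ t)‖ ^ 2)) + 2 * (f (γ b) - f (γ a)) := by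
  have hg := continuousOn_gradient_comp hf hγ
  have hsq : IntervalIntegrable (fun t => ‖γ' t‖ ^ 2 + ‖∇ f (γ t)‖ ^ 2) volume a b :=
    ((hγ'.norm.pow 2).add (hg.norm.pow 2)).intervalIntegrable_of_Icc hab
  have hinner : IntervalIntegrable (fun t => ⟪∇ f (γ t), γ' t⟫) volume a b :=
    (hg.inner hγ').intervalIntegrable_of_Icc hab
  rw [← integral_inner_gradient_eq_sub hf hab hγ hγ', ← intervalIntegral.integral_const_mul,
    ← intervalIntegral.integral_add hsq (hinner.const_mul 2)]
  refine intervalIntegral.integral_congr fun t _ => ?_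
  simp only [norm_add_sq_real, real_inner_comm (γ' t)]
  ring

end GradientAlongCurve

/-- **De Giorgi's optimal energy dissipation inequality characterizes gradient flows.**
If `E : ℝ^N → ℝ` is continuously differentiable and `x : [0,T] → ℝ^N` is continuously
differentiable and satisfies
`E(x(T)) + (1/2)∫₀^T (|x'(t)|² + |∇E(x(t))|²) dt ≤ E(x(0))`,
then `x'(t) = -∇E(x(t))` for every `t ∈ [0,T]`. -/
theorem gradientFlow_of_deGiorgi_inequality
    {N : ℕ} (T : ℝ) (hT : 0 < T)
    (E : EuclideanSpace ℝ (Fin N) → ℝ) (hE : ContDiff ℝ 1 E)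
    (x x' : ℝ → EuclideanSpace ℝ (Fin N))
    (hx : ∀ t ∈ Set.Icc (0 : ℝ) T, HasDerivAt x (x' t) t)
    (hx' : ContinuousOn x' (Set.Icc (0 : ℝ) T))
    (hineq : E (x T) + (1 / 2) * ∫ t in (0 : ℝ)..T,
        (‖x' t‖ ^ 2 + ‖gradient E (x t)‖ ^ 2) ≤ E (x 0)) :
    ∀ t ∈ Set.Icc (0 : ℝ) T, x' t = -gradient E (x t) := by
  have hsq_zero : EqOn (fun t => ‖x' t + ∇ E (x t)‖ ^ 2) 0 (Icc 0 T) := by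
    refine eqOn_zero_of_intervalIntegral_nonpos hT
      ((hx'.add (continuousOn_gradient_comp hE hx)).norm.pow 2)
      (fun t _ => by positivity) ?_
    rw [integral_norm_add_gradient_sq hE hT.le hx hx']
    linarith
  intro t ht
  simpa [eq_neg_iff_add_eq_zero] using hsq_zero ht
end

section
/- Let N ∈ ℕ and let W : ℝ^N → [0,∞) be continuous with zero set {u : W(u) = 0} equal to a nonempty finite set {α_1, …, α_P}. Then the geodesic distance d_W is a metric on ℝ^N: for all u, v, w ∈ ℝ^N one has d_W(u,v) < ∞, d_W(u,v) = d_W(v,u), d_W(u,w) ≤ d_W(u,v) + d_W(v,w), and d_W(u,v) = 0 if and only if u = v. -/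
/-!
Segments and reversed paths give finiteness, `d_W(u,u) = 0` and symmetry. For the triangle
inequality, two admissible paths are reparametrised by `Real.smoothTransition`, whose derivative
vanishes at `0` and `1`, so that their concatenation is again `C¹`; its weighted length is the sum
of the two. For `u ≠ v`: the zero set of `W` is finite, so some annulus `r₁ ≤ ‖x - u‖ ≤ r₂` with
`r₂ < ‖v - u‖` avoids it, `W ≥ m > 0` there by compactness, and every path from `u` to `v`
crosses the annulus, which costs at least `√(2m) (r₂ - r₁)`.
-/

open MeasureTheory
open scoped ENNReal

/-- The geodesic distance induced by a potential `W`: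
`d_W(u,v) = inf { ∫₀¹ √(2 W(γ(t))) |γ'(t)| dt : γ ∈ C¹([0,1];ℝ^N), γ(0)=u, γ(1)=v }`,
with values in `ℝ≥0∞` so that finiteness is a meaningful assertion. -/
noncomputable def geodDist {N : ℕ} (W : EuclideanSpace ℝ (Fin N) → ℝ)
    (u v : EuclideanSpace ℝ (Fin N)) : ℝ≥0∞ :=
  sInf {r : ℝ≥0∞ | ∃ γ γ' : ℝ → EuclideanSpace ℝ (Fin N),
    (∀ t ∈ Set.Icc (0 : ℝ) 1, HasDerivAt γ (γ' t) t) ∧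
    ContinuousOn γ' (Set.Icc (0 : ℝ) 1) ∧ γ 0 = u ∧ γ 1 = v ∧
    r = ENNReal.ofReal (∫ t in (0 : ℝ)..1, Real.sqrt (2 * W (γ t)) * ‖γ' t‖)}

open Set Real

namespace Real.smoothTransition

theorem hasDerivAt_deriv (t : ℝ) : HasDerivAt smoothTransition (deriv smoothTransition t) t :=
  (smoothTransition.contDiff (n := 1).differentiable one_ne_zero t).hasDerivAt

theorem continuous_deriv : Continuous (deriv smoothTransition) :=
  smoothTransition.contDiff (n := 1).continuous_deriv le_rfl

theorem deriv_nonneg (t : ℝ) : 0 ≤ deriv smoothTransition t :=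
  smoothTransition.monotone.deriv_nonneg

theorem deriv_of_nonpos {t : ℝ} (ht : t ≤ 0) : deriv smoothTransition t = 0 :=
  IsLocalMin.deriv_eq_zero <| Filter.Eventually.of_forall fun s => by
    rw [zero_of_nonpos ht]; exact nonneg s

theorem deriv_of_one_le {t : ℝ} (ht : 1 ≤ t) : deriv smoothTransition t = 0 :=
  IsLocalMax.deriv_eq_zero <| Filter.Eventually.of_forall fun s => by
    rw [one_of_one_le ht]; exact le_one s

theorem hasDerivAt_comp_two_mul_sub (c t : ℝ) :
    HasDerivAt (fun t => smoothTransition (2 * t - c))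
      (2 * deriv smoothTransition (2 * t - c)) t := by
  have h := (hasDerivAt_deriv (2 * t - c)).comp t (((hasDerivAt_id' t).const_mul 2).sub_const c)
  rwa [mul_one, mul_comm] at h

theorem mem_Icc (t : ℝ) : smoothTransition t ∈ Icc 0 1 := ⟨nonneg t, le_one t⟩

end Real.smoothTransition

theorem ContinuousOn.exists_crossing {f : ℝ → ℝ} {a b r₁ r₂ : ℝ}
    (hf : ContinuousOn f (Icc a b)) (hab : a ≤ b) (ha : f a ≤ r₁) (hb : r₂ ≤ f b) :
    ∃ s t, a ≤ s ∧ s ≤ t ∧ t ≤ b ∧ f s ≤ r₁ ∧ r₂ ≤ f t ∧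
      ∀ x ∈ Ioo s t, r₁ < f x ∧ f x < r₂ := by
  obtain ⟨t, ⟨⟨hat, htb⟩, hft⟩, ht_least⟩ :=
    (isCompact_Icc.of_isClosed_subset
      (hf.preimage_isClosed_of_isClosed isClosed_Icc isClosed_Ici)
      inter_subset_left).exists_isLeast ⟨b, ⟨hab, le_rfl⟩, hb⟩
  obtain ⟨s, ⟨⟨has, hst⟩, hfs⟩, hs_greatest⟩ :=
    (isCompact_Icc.of_isClosed_subset
      ((hf.mono (Icc_subset_Icc_right htb)).preimage_isClosed_of_isClosed isClosed_Icc isClosed_Iic)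
      inter_subset_left).exists_isGreatest ⟨a, ⟨le_rfl, hat⟩, ha⟩
  refine ⟨s, t, has, hst, htb, hfs, hft, fun x hx => ⟨?_, ?_⟩⟩
  · exact lt_of_not_ge fun h => hx.1.not_ge (hs_greatest ⟨⟨has.trans hx.1.le, hx.2.le⟩, h⟩)
  · exact lt_of_not_ge fun h =>
      hx.2.not_ge (ht_least ⟨⟨has.trans hx.1.le, hx.2.le.trans htb⟩, h⟩)

theorem Set.Finite.exists_Icc_subset_Ioo_diff {B : Set ℝ} (hB : B.Finite) {a b : ℝ}
    (hab : a < b) :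
    ∃ r₁ r₂, r₁ < r₂ ∧ Icc r₁ r₂ ⊆ Ioo a b \ B := by
  obtain ⟨x, hx⟩ := ((Ioo_infinite hab).sdiff hB).nonempty
  obtain ⟨ε, hε, hball⟩ := Metric.mem_nhds_iff.1 ((isOpen_Ioo.sdiff hB.isClosed).mem_nhds hx)
  refine ⟨x - ε / 2, x + ε / 2, by linarith, ?_⟩
  rw [← Real.closedBall_eq_Icc]
  exact (Metric.closedBall_subset_ball (half_lt_self hε)).trans hball

section Paths

variable {E : Type*} [NormedAddCommGroup E]

noncomputable def lengthDensity (W : E → ℝ) (γ γ' : ℝ → E) (t : ℝ) : ℝ :=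
  √(2 * W (γ t)) * ‖γ' t‖

theorem integral_lengthDensity_reverse (W : E → ℝ) (γ γ' : ℝ → E) :
    ∫ t in (0 : ℝ)..1, lengthDensity W (fun t => γ (1 - t)) (fun t => -γ' (1 - t)) t =
      ∫ t in (0 : ℝ)..1, lengthDensity W γ γ' t := by
  simpa [lengthDensity] using
    intervalIntegral.integral_comp_sub_left (a := 0) (b := 1) (lengthDensity W γ γ') 1

variable [NormedSpace ℝ E]

theorem integral_lengthDensity_comp {W : E → ℝ} {γ γ' : ℝ → E} {φ φ' : ℝ → ℝ} {a b : ℝ}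
    (hφ : ∀ t ∈ uIcc a b, HasDerivAt φ (φ' t) t) (hφ' : ContinuousOn φ' (uIcc a b))
    (hφ'_nonneg : ∀ t ∈ uIcc a b, 0 ≤ φ' t)
    (hF : ContinuousOn (lengthDensity W γ γ') (φ '' uIcc a b)) :
    ∫ t in a..b, lengthDensity W (γ ∘ φ) (fun t => φ' t • γ' (φ t)) t =
      ∫ s in φ a..φ b, lengthDensity W γ γ' s := by
  rw [← intervalIntegral.integral_comp_mul_deriv' hφ hφ' hF]
  refine intervalIntegral.integral_congr fun t ht => ?_
  simp only [lengthDensity, Function.comp_apply, norm_smul, Real.norm_eq_abs,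
    abs_of_nonneg (hφ'_nonneg t ht)]
  ring

structure IsC1Path (γ γ' : ℝ → E) : Prop where
  hasDerivAt : ∀ t ∈ Icc (0 : ℝ) 1, HasDerivAt γ (γ' t) t
  continuousOn_deriv : ContinuousOn γ' (Icc 0 1)

variable {W : E → ℝ} {γ γ' : ℝ → E}

namespace IsC1Path

theorem continuousOn (hγ : IsC1Path γ γ') : ContinuousOn γ (Icc 0 1) :=
  fun t ht => (hγ.hasDerivAt t ht).continuousAt.continuousWithinAt

theorem continuousOn_lengthDensity (hWc : Continuous W) (hγ : IsC1Path γ γ') :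
    ContinuousOn (lengthDensity W γ γ') (Icc 0 1) :=
  ((continuous_const.mul hWc).comp_continuousOn hγ.continuousOn).sqrt.mul
    hγ.continuousOn_deriv.norm

theorem segment (u v : E) : IsC1Path (fun t : ℝ => u + t • (v - u)) fun _ => v - u where
  hasDerivAt t _ := by simpa using ((hasDerivAt_id t).smul_const (v - u)).const_add u
  continuousOn_deriv := continuousOn_const

theorem reverse (hγ : IsC1Path γ γ') :
    IsC1Path (fun t => γ (1 - t)) fun t => -γ' (1 - t) where
  hasDerivAt t ht := by
    have h := (hγ.hasDerivAt (1 - t) ⟨by linarith [ht.2], by linarith [ht.1]⟩).scomp t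
      ((hasDerivAt_id t).const_sub 1)
    simpa [Function.comp_def] using h
  continuousOn_deriv := (hγ.continuousOn_deriv.comp (by fun_prop)
    fun t ht => ⟨by linarith [ht.2], by linarith [ht.1]⟩).neg

theorem norm_sub_le_integral_norm [CompleteSpace E] (hγ : IsC1Path γ γ') {s t : ℝ}
    (hs : 0 ≤ s) (hst : s ≤ t) (ht : t ≤ 1) :
    ‖γ t - γ s‖ ≤ ∫ x in s..t, ‖γ' x‖ := by
  have hsub : uIcc s t ⊆ Icc 0 1 := by
    rw [uIcc_of_le hst]; exact Icc_subset_Icc hs ht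
  rw [← intervalIntegral.integral_eq_sub_of_hasDerivAt (fun x hx => hγ.hasDerivAt x (hsub hx))
    (hγ.continuousOn_deriv.mono hsub).intervalIntegrable]
  exact intervalIntegral.norm_integral_le_integral_norm hst

end IsC1Path

end Paths

section Concat

variable {E : Type*} [NormedAddCommGroup E] {γ₁ γ₂ : ℝ → E}

/-- Adding the two reparametrised pieces, rather than gluing them with an `if`, makes
`pathConcat` differentiable everywhere: `smoothTransition (2 * t - 1)` is constant for `t ≤ 1/2`
and `smoothTransition (2 * t)` is constant for `1/2 ≤ t`. The `- 0` lets both pieces share the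
lemmas about `smoothTransition (2 * t - c)`. -/
noncomputable def pathConcat (γ₁ γ₂ : ℝ → E) (t : ℝ) : E :=
  γ₁ (smoothTransition (2 * t - 0)) + (γ₂ (smoothTransition (2 * t - 1)) - γ₂ 0)

theorem pathConcat_zero (γ₁ γ₂ : ℝ → E) : pathConcat γ₁ γ₂ 0 = γ₁ 0 := by
  rw [pathConcat, smoothTransition.zero_of_nonpos (by norm_num),
    smoothTransition.zero_of_nonpos (by norm_num), sub_self, add_zero]

theorem pathConcat_one (hmatch : γ₁ 1 = γ₂ 0) : pathConcat γ₁ γ₂ 1 = γ₂ 1 := by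
  rw [pathConcat, smoothTransition.one_of_one_le (by norm_num),
    smoothTransition.one_of_one_le (by norm_num), hmatch, add_sub_cancel]

variable [NormedSpace ℝ E] {W : E → ℝ} {γ γ' γ₁' γ₂' : ℝ → E}

noncomputable def pathConcatDeriv (γ₁' γ₂' : ℝ → E) (t : ℝ) : E :=
  (2 * deriv smoothTransition (2 * t - 0)) • γ₁' (smoothTransition (2 * t - 0)) +
    (2 * deriv smoothTransition (2 * t - 1)) • γ₂' (smoothTransition (2 * t - 1))

theorem IsC1Path.hasDerivAt_comp_smoothTransition (hγ : IsC1Path γ γ') (c t : ℝ) :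
    HasDerivAt (fun t => γ (smoothTransition (2 * t - c)))
      ((2 * deriv smoothTransition (2 * t - c)) • γ' (smoothTransition (2 * t - c))) t :=
  (hγ.hasDerivAt (smoothTransition (2 * t - c)) (smoothTransition.mem_Icc _)).scomp t
    (smoothTransition.hasDerivAt_comp_two_mul_sub c t)

theorem IsC1Path.continuous_deriv_comp_smoothTransition (hγ : IsC1Path γ γ') (c : ℝ) :
    Continuous fun t =>
      (2 * deriv smoothTransition (2 * t - c)) • γ' (smoothTransition (2 * t - c)) :=
  (continuous_const.mul (smoothTransition.continuous_deriv.comp (by fun_prop))).smul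
    (hγ.continuousOn_deriv.comp_continuous (smoothTransition.continuous.comp (by fun_prop))
      fun _ => smoothTransition.mem_Icc _)

theorem IsC1Path.integral_lengthDensity_comp_smoothTransition (hWc : Continuous W)
    (hγ : IsC1Path γ γ') (c a b : ℝ) :
    ∫ t in a..b, lengthDensity W (fun t => γ (smoothTransition (2 * t - c)))
        (fun t => (2 * deriv smoothTransition (2 * t - c)) • γ' (smoothTransition (2 * t - c))) t =
      ∫ s in smoothTransition (2 * a - c)..smoothTransition (2 * b - c), lengthDensity W γ γ' s :=
  integral_lengthDensity_comp (fun t _ => smoothTransition.hasDerivAt_comp_two_mul_sub c t)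
    (continuous_const.mul (smoothTransition.continuous_deriv.comp (by fun_prop))).continuousOn
    (fun t _ => mul_nonneg zero_le_two (smoothTransition.deriv_nonneg _))
    ((hγ.continuousOn_lengthDensity hWc).mono (image_subset_iff.2
      fun t _ => smoothTransition.mem_Icc _))

theorem IsC1Path.pathConcat (h₁ : IsC1Path γ₁ γ₁') (h₂ : IsC1Path γ₂ γ₂') :
    IsC1Path (pathConcat γ₁ γ₂) (pathConcatDeriv γ₁' γ₂') where
  hasDerivAt t _ :=
    (h₁.hasDerivAt_comp_smoothTransition 0 t).add
      ((h₂.hasDerivAt_comp_smoothTransition 1 t).sub_const (γ₂ 0))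
  continuousOn_deriv :=
    ((h₁.continuous_deriv_comp_smoothTransition 0).add
      (h₂.continuous_deriv_comp_smoothTransition 1)).continuousOn

theorem lengthDensity_pathConcat_of_le_half {t : ℝ} (ht : t ≤ 1 / 2) :
    lengthDensity W (pathConcat γ₁ γ₂) (pathConcatDeriv γ₁' γ₂') t =
      lengthDensity W (fun t => γ₁ (smoothTransition (2 * t - 0)))
        (fun t => (2 * deriv smoothTransition (2 * t - 0)) • γ₁' (smoothTransition (2 * t - 0)))
        t := by
  have ht' : 2 * t - 1 ≤ 0 := by linarith
  simp only [lengthDensity, pathConcat, pathConcatDeriv, smoothTransition.zero_of_nonpos ht',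
    smoothTransition.deriv_of_nonpos ht', sub_self, add_zero, mul_zero, zero_smul]

theorem lengthDensity_pathConcat_of_half_le (hmatch : γ₁ 1 = γ₂ 0) {t : ℝ} (ht : 1 / 2 ≤ t) :
    lengthDensity W (pathConcat γ₁ γ₂) (pathConcatDeriv γ₁' γ₂') t =
      lengthDensity W (fun t => γ₂ (smoothTransition (2 * t - 1)))
        (fun t => (2 * deriv smoothTransition (2 * t - 1)) • γ₂' (smoothTransition (2 * t - 1)))
        t := by
  have ht' : 1 ≤ 2 * t - 0 := by linarith
  simp only [lengthDensity, pathConcat, pathConcatDeriv, smoothTransition.one_of_one_le ht',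
    smoothTransition.deriv_of_one_le ht', hmatch, add_sub_cancel, mul_zero, zero_smul, zero_add]

theorem integral_lengthDensity_pathConcat (hWc : Continuous W) (h₁ : IsC1Path γ₁ γ₁')
    (h₂ : IsC1Path γ₂ γ₂') (hmatch : γ₁ 1 = γ₂ 0) :
    ∫ t in (0 : ℝ)..1, lengthDensity W (pathConcat γ₁ γ₂) (pathConcatDeriv γ₁' γ₂') t =
      (∫ t in (0 : ℝ)..1, lengthDensity W γ₁ γ₁' t) +
        ∫ t in (0 : ℝ)..1, lengthDensity W γ₂ γ₂' t := by
  have hint : ∀ a b : ℝ, a ∈ Icc (0 : ℝ) 1 → b ∈ Icc (0 : ℝ) 1 → IntervalIntegrable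
      (lengthDensity W (pathConcat γ₁ γ₂) (pathConcatDeriv γ₁' γ₂')) volume a b :=
    fun a b ha hb => (((h₁.pathConcat h₂).continuousOn_lengthDensity hWc).mono
      (uIcc_subset_Icc ha hb)).intervalIntegrable
  have hhalf : (1 / 2 : ℝ) ∈ Icc (0 : ℝ) 1 := by norm_num
  rw [← intervalIntegral.integral_add_adjacent_intervals (hint 0 (1 / 2) (by simp) hhalf)
    (hint (1 / 2) 1 hhalf (by simp))]
  congr 1
  · rw [intervalIntegral.integral_congr fun t ht => lengthDensity_pathConcat_of_le_half
      (by rw [uIcc_of_le (by norm_num)] at ht; exact ht.2),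
      h₁.integral_lengthDensity_comp_smoothTransition hWc]
    norm_num
  · rw [intervalIntegral.integral_congr fun t ht => lengthDensity_pathConcat_of_half_le hmatch
      (by rw [uIcc_of_le (by norm_num)] at ht; exact ht.1),
      h₂.integral_lengthDensity_comp_smoothTransition hWc]
    norm_num

end Concat

section Crossing

variable {E : Type*} [NormedAddCommGroup E] [NormedSpace ℝ E] [CompleteSpace E]
  {W : E → ℝ} {γ γ' : ℝ → E}

theorem IsC1Path.sqrt_mul_le_integral_lengthDensity (hWc : Continuous W) (hγ : IsC1Path γ γ')
    {c : E} {m r₁ r₂ : ℝ} (hW : ∀ x, r₁ < ‖x - c‖ → ‖x - c‖ < r₂ → m ≤ W x)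
    (h0 : ‖γ 0 - c‖ ≤ r₁) (h1 : r₂ ≤ ‖γ 1 - c‖) :
    √(2 * m) * (r₂ - r₁) ≤ ∫ t in (0 : ℝ)..1, lengthDensity W γ γ' t := by
  have hf : ContinuousOn (fun x => ‖γ x - c‖) (Icc 0 1) :=
    (hγ.continuousOn.sub continuousOn_const).norm
  obtain ⟨s, t, hs, hst, ht, hfs, hft, hmid⟩ := hf.exists_crossing zero_le_one h0 h1
  have hsub : uIcc s t ⊆ Icc 0 1 := by
    rw [uIcc_of_le hst]; exact Icc_subset_Icc hs ht
  have hdens := hγ.continuousOn_lengthDensity hWc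
  calc √(2 * m) * (r₂ - r₁)
      ≤ √(2 * m) * ‖γ t - γ s‖ := by
        gcongr
        have h := norm_sub_norm_le (γ t - c) (γ s - c)
        rw [sub_sub_sub_cancel_right] at h
        linarith
    _ ≤ √(2 * m) * ∫ x in s..t, ‖γ' x‖ := by
        gcongr
        exact hγ.norm_sub_le_integral_norm hs hst ht
    _ = ∫ x in s..t, √(2 * m) * ‖γ' x‖ := (intervalIntegral.integral_const_mul _ _).symm
    _ ≤ ∫ x in s..t, lengthDensity W γ γ' x := by
        refine intervalIntegral.integral_mono_on_of_le_Ioo hst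
          (continuousOn_const.mul (hγ.continuousOn_deriv.mono hsub).norm).intervalIntegrable
          (hdens.mono hsub).intervalIntegrable fun x hx => ?_
        unfold lengthDensity
        gcongr
        exact hW _ (hmid x hx).1 (hmid x hx).2
    _ ≤ ∫ x in (0 : ℝ)..1, lengthDensity W γ γ' x :=
        intervalIntegral.integral_mono_interval hs hst ht
          (ae_of_all _ fun x => by unfold lengthDensity; positivity)
          (hdens.mono (uIcc_of_le zero_le_one).subset).intervalIntegrable

end Crossing

section GeodDist

variable {N : ℕ} {W : EuclideanSpace ℝ (Fin N) → ℝ} {u v w : EuclideanSpace ℝ (Fin N)}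

theorem geodDist_le_of_isC1Path {γ γ' : ℝ → EuclideanSpace ℝ (Fin N)} (hγ : IsC1Path γ γ')
    (h0 : γ 0 = u) (h1 : γ 1 = v) :
    geodDist W u v ≤ ENNReal.ofReal (∫ t in (0 : ℝ)..1, lengthDensity W γ γ' t) :=
  sInf_le ⟨γ, γ', hγ.hasDerivAt, hγ.continuousOn_deriv, h0, h1, rfl⟩

theorem le_geodDist {a : ℝ≥0∞}
    (h : ∀ γ γ', IsC1Path γ γ' → γ 0 = u → γ 1 = v →
      a ≤ ENNReal.ofReal (∫ t in (0 : ℝ)..1, lengthDensity W γ γ' t)) :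
    a ≤ geodDist W u v :=
  le_sInf <| by
    rintro _ ⟨γ, γ', hd, hc, h0, h1, rfl⟩
    exact h γ γ' ⟨hd, hc⟩ h0 h1

theorem geodDist_le_segment :
    geodDist W u v ≤ ENNReal.ofReal
      (∫ t in (0 : ℝ)..1, lengthDensity W (fun t => u + t • (v - u)) (fun _ => v - u) t) :=
  geodDist_le_of_isC1Path (IsC1Path.segment u v) (by simp) (by simp)

theorem geodDist_lt_top : geodDist W u v < ⊤ :=
  geodDist_le_segment.trans_lt ENNReal.ofReal_lt_top

theorem geodDist_self : geodDist W u u = 0 :=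
  nonpos_iff_eq_zero.1 <| geodDist_le_segment.trans_eq <| by simp [lengthDensity]

theorem geodDist_le_swap : geodDist W u v ≤ geodDist W v u :=
  le_geodDist fun _ _ hγ h0 h1 =>
    (geodDist_le_of_isC1Path hγ.reverse (by simpa using h1) (by simpa using h0)).trans_eq
      (by rw [integral_lengthDensity_reverse])

theorem geodDist_comm : geodDist W u v = geodDist W v u :=
  le_antisymm geodDist_le_swap geodDist_le_swap

theorem geodDist_triangle (hWc : Continuous W) :
    geodDist W u w ≤ geodDist W u v + geodDist W v w := by
  show geodDist W u w ≤ sInf _ + sInf _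
  simp only [sInf_eq_iInf]
  refine ENNReal.le_iInf₂_add_iInf₂ ?_
  rintro _ ⟨γ₁, γ₁', hd₁, hc₁, h₁0, h₁1, rfl⟩ _ ⟨γ₂, γ₂', hd₂, hc₂, h₂0, h₂1, rfl⟩
  have h₁ : IsC1Path γ₁ γ₁' := ⟨hd₁, hc₁⟩
  have h₂ : IsC1Path γ₂ γ₂' := ⟨hd₂, hc₂⟩
  calc geodDist W u w
      ≤ ENNReal.ofReal (∫ t in (0 : ℝ)..1,
          lengthDensity W (pathConcat γ₁ γ₂) (pathConcatDeriv γ₁' γ₂') t) :=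
        geodDist_le_of_isC1Path (h₁.pathConcat h₂) (by rw [pathConcat_zero, h₁0])
          (by rw [pathConcat_one (h₁1.trans h₂0.symm), h₂1])
    _ ≤ _ := by
        rw [integral_lengthDensity_pathConcat hWc h₁ h₂ (h₁1.trans h₂0.symm)]
        exact ENNReal.ofReal_add_le

theorem geodDist_pos (hWc : Continuous W) (hWnn : ∀ x, 0 ≤ W x)
    (hfin : {x | W x = 0}.Finite) (huv : u ≠ v) : 0 < geodDist W u v := by
  obtain ⟨r₁, r₂, hr, hsub⟩ := (hfin.image fun x => ‖x - u‖).exists_Icc_subset_Ioo_diff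
    (norm_pos_iff.2 (sub_ne_zero.2 huv.symm))
  have hr₁ : 0 < r₁ := (hsub (left_mem_Icc.2 hr.le)).1.1
  have hr₂ : r₂ < ‖v - u‖ := (hsub (right_mem_Icc.2 hr.le)).1.2
  have hA : IsCompact ((fun x => ‖x - u‖) ⁻¹' Icc r₁ r₂) :=
    (isCompact_closedBall u r₂).of_isClosed_subset (isClosed_Icc.preimage (by fun_prop))
      fun x hx => by simpa [dist_eq_norm] using hx.2
  obtain ⟨m, hm, hmA⟩ := hA.exists_forall_le' hWc.continuousOn
    fun x hx => (hWnn x).lt_of_ne' fun hx0 => (hsub hx).2 ⟨x, hx0, rfl⟩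
  calc 0 < ENNReal.ofReal (√(2 * m) * (r₂ - r₁)) :=
        ENNReal.ofReal_pos.2 (mul_pos (Real.sqrt_pos.2 (by linarith)) (sub_pos.2 hr))
    _ ≤ geodDist W u v := le_geodDist fun γ γ' hγ h0 h1 => ENNReal.ofReal_le_ofReal <|
        hγ.sqrt_mul_le_integral_lengthDensity hWc (fun x h₁ h₂ => hmA x ⟨h₁.le, h₂.le⟩)
          (by simp [h0, hr₁.le]) (by rw [h1]; exact hr₂.le)

end GeodDist

theorem geodDist_is_metric_general {N : ℕ} (W : EuclideanSpace ℝ (Fin N) → ℝ)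
    (hWc : Continuous W) (hWnn : ∀ u, 0 ≤ W u)
    (S : Finset (EuclideanSpace ℝ (Fin N)))
    (hzero : {u | W u = 0} = (S : Set (EuclideanSpace ℝ (Fin N)))) :
    ∀ u v w : EuclideanSpace ℝ (Fin N),
      geodDist W u v < ⊤ ∧
      geodDist W u v = geodDist W v u ∧
      geodDist W u w ≤ geodDist W u v + geodDist W v w ∧
      (geodDist W u v = 0 ↔ u = v) := by
  intro u v w
  have hfin : {x | W x = 0}.Finite := hzero ▸ S.finite_toSet
  refine ⟨geodDist_lt_top, geodDist_comm, geodDist_triangle hWc, fun h => ?_, ?_⟩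
  · by_contra huv
    exact (geodDist_pos hWc hWnn hfin huv).ne' h
  · rintro rfl
    exact geodDist_self

/-- **The geodesic distance is a metric.** If `W : ℝ^N → [0,∞)` is continuous with
nonempty finite zero set, then `d_W` is finite, symmetric, satisfies the triangle
inequality, and vanishes exactly on the diagonal. -/
theorem geodDist_is_metric {N : ℕ} (W : EuclideanSpace ℝ (Fin N) → ℝ)
    (hWc : Continuous W) (hWnn : ∀ u, 0 ≤ W u)
    (S : Finset (EuclideanSpace ℝ (Fin N))) (hSne : S.Nonempty)
    (hzero : {u | W u = 0} = (S : Set (EuclideanSpace ℝ (Fin N)))) :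
    ∀ u v w : EuclideanSpace ℝ (Fin N),
      geodDist W u v < ⊤ ∧
      geodDist W u v = geodDist W v u ∧
      geodDist W u w ≤ geodDist W u v + geodDist W v w ∧
      (geodDist W u v = 0 ↔ u = v) :=
  geodDist_is_metric_general W hWc hWnn S hzero
end

section
/- Let Λ > 0 and let ρ : ℝ → ℝ be smooth, Λ-periodic, and strictly positive. Suppose H : ℝ → ℝ² is locally integrable, Λ-periodic, and satisfies ∫₀^Λ ξ₁'(x)·ρ(x) dx = −∫₀^Λ ⟨H(x), ξ(x)⟩·ρ(x) dx for every smooth Λ-periodic vector field ξ = (ξ₁, ξ₂) : ℝ → ℝ². Then H(x) = (ρ'(x)/ρ(x))·e₁ for almost every x ∈ ℝ. In particular ⟨H(x), e₂⟩ = 0 almost everywhere, and if ρ is not constant then H ≠ 0 on a set of positive measure; hence the generalized mean curvature of the varifold with density ρ on the line ℝ × {0} and constant orientation e₂ does not point in the normal direction e₂. -/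
open MeasureTheory

open Set Function intervalIntegral
open scoped Real

/-- If a locally integrable `Λ`-periodic function is orthogonal (over one period) to all
analytic `Λ`-periodic test functions, it vanishes a.e. -/
private lemma aux_ae_zero {Λ : ℝ} (hΛ : 0 < Λ) {F : ℝ → ℝ}
    (hF : LocallyIntegrable F volume) (hFper : Function.Periodic F Λ)
    (h : ∀ φ : ℝ → ℝ, ContDiff ℝ (⊤ : ℕ∞) φ → Function.Periodic φ Λ →
      ∫ x in (0:ℝ)..Λ, φ x * F x = 0) :
    ∀ᵐ x : ℝ, F x = 0 := by
  haveI : Fact (0 < Λ) := ⟨hΛ⟩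
  have hFIcc : IntegrableOn F (Icc (0:ℝ) Λ) volume := hF.integrableOn_isCompact isCompact_Icc
  have muliiR : ∀ u : ℝ → ℝ, Continuous u →
      IntervalIntegrable (fun x => u x * F x) volume 0 Λ := by
    intro u hu
    have := IntegrableOn.continuousOn_mul (hu.continuousOn) hFIcc isCompact_Icc
    exact (intervalIntegrable_iff_integrableOn_Ioc_of_le hΛ.le).mpr
      (this.mono_set Ioc_subset_Icc_self)
  have mulii : ∀ u : ℝ → ℂ, Continuous u →
      IntervalIntegrable (fun x => u x * (F x : ℂ)) volume 0 Λ := by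
    intro u hu
    have h1 : IntegrableOn (fun x => (F x : ℂ)) (Icc (0:ℝ) Λ) volume := hFIcc.ofReal
    have := IntegrableOn.continuousOn_mul (hu.continuousOn) h1 isCompact_Icc
    exact (intervalIntegrable_iff_integrableOn_Ioc_of_le hΛ.le).mpr
      (this.mono_set Ioc_subset_Icc_self)
  have ofRealInt : ∀ u : ℝ → ℝ, (∫ x in (0:ℝ)..Λ, (u x : ℂ) * (F x : ℂ))
      = ((∫ x in (0:ℝ)..Λ, u x * F x : ℝ) : ℂ) := by
    intro u
    rw [← intervalIntegral.integral_ofReal]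
    congr 1
    ext x
    push_cast
    ring
  have hC : ∀ u : ℝ → ℝ, ContDiff ℝ (⊤ : ℕ∞) u → Function.Periodic u Λ →
      (∫ x in (0:ℝ)..Λ, (u x : ℂ) * (F x : ℂ)) = 0 := by
    intro u hu hup
    rw [ofRealInt, h u hu hup]
    norm_num
  -- Step A : the identity holds for all continuous periodic test functions
  have stepA : ∀ φ : ℝ → ℝ, Continuous φ → Function.Periodic φ Λ →
      ∫ x in (0:ℝ)..Λ, φ x * F x = 0 := by
    have hcoe : Continuous (fun x : ℝ => (x : AddCircle Λ)) := AddCircle.continuous_mk' Λ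
    have hψii : ∀ ψ : C(AddCircle Λ, ℂ),
        IntervalIntegrable (fun x : ℝ => ψ (x : AddCircle Λ) * (F x : ℂ)) volume 0 Λ :=
      fun ψ => mulii _ (ψ.continuous.comp hcoe)
    have hFnormii : IntervalIntegrable (fun x => ‖F x‖) volume 0 Λ := by
      have := muliiR (fun _ => 1) continuous_const
      simpa using this.norm
    let L : C(AddCircle Λ, ℂ) →ₗ[ℂ] ℂ :=
      { toFun := fun ψ => ∫ x in (0:ℝ)..Λ, ψ (x : AddCircle Λ) * (F x : ℂ)
        map_add' := by
          intro ψ χ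
          simp only [ContinuousMap.add_apply, add_mul]
          exact intervalIntegral.integral_add (hψii ψ) (hψii χ)
        map_smul' := by
          intro c ψ
          simp only [ContinuousMap.smul_apply, smul_eq_mul, mul_assoc, RingHom.id_apply]
          exact intervalIntegral.integral_const_mul c _ }
    have hLbound : ∀ ψ : C(AddCircle Λ, ℂ), ‖L ψ‖ ≤ (∫ x in (0:ℝ)..Λ, ‖F x‖) * ‖ψ‖ := by
      intro ψ
      have h1 : ‖L ψ‖ ≤ ∫ x in (0:ℝ)..Λ, ‖ψ (x : AddCircle Λ) * (F x : ℂ)‖ :=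
        intervalIntegral.norm_integral_le_integral_norm hΛ.le
      refine h1.trans ?_
      rw [mul_comm, ← intervalIntegral.integral_const_mul]
      refine intervalIntegral.integral_mono_on hΛ.le ((hψii ψ).norm)
        (hFnormii.const_mul _) ?_
      intro x _
      rw [norm_mul, Complex.norm_real]
      exact mul_le_mul_of_nonneg_right (ψ.norm_coe_le_norm _) (norm_nonneg _)
    let Lc : C(AddCircle Λ, ℂ) →L[ℂ] ℂ := LinearMap.mkContinuous L _ hLbound
    have hfour : ∀ n : ℤ, Lc (fourier n) = 0 := by
      intro n
      show (∫ x in (0:ℝ)..Λ, fourier n (x : AddCircle Λ) * (F x : ℂ)) = 0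
      have hucos : ContDiff ℝ (⊤ : ℕ∞) (fun x : ℝ => Real.cos (2*π*n/Λ*x)) :=
        Real.contDiff_cos.comp (contDiff_const.mul contDiff_id)
      have husin : ContDiff ℝ (⊤ : ℕ∞) (fun x : ℝ => Real.sin (2*π*n/Λ*x)) :=
        Real.contDiff_sin.comp (contDiff_const.mul contDiff_id)
      have harg : ∀ x : ℝ, 2*π*↑n/Λ*(x+Λ) = 2*π*↑n/Λ*x + ↑n * (2*π) := by
        intro x; field_simp
      have hpcos : Function.Periodic (fun x : ℝ => Real.cos (2*π*n/Λ*x)) Λ := by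
        intro x; simp only []; rw [harg x, Real.cos_add_int_mul_two_pi]
      have hpsin : Function.Periodic (fun x : ℝ => Real.sin (2*π*n/Λ*x)) Λ := by
        intro x; simp only []; rw [harg x, Real.sin_add_int_mul_two_pi]
      have hexp : ∀ x : ℝ, fourier n (x : AddCircle Λ)
          = (Real.cos (2*π*n/Λ*x) : ℂ) + (Real.sin (2*π*n/Λ*x) : ℂ) * Complex.I := by
        intro x
        rw [fourier_coe_apply,
          show 2 * (π:ℂ) * Complex.I * (n:ℂ) * (x:ℂ) / (Λ:ℂ)
            = ((2*π*n/Λ*x : ℝ) : ℂ) * Complex.I by push_cast; ring,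
          Complex.exp_mul_I, ← Complex.ofReal_cos, ← Complex.ofReal_sin]
      have hc1 : Continuous (fun x : ℝ => ((Real.cos (2*π*n/Λ*x) : ℝ) : ℂ)) :=
        Complex.continuous_ofReal.comp (hucos.continuous)
      have hc2 : Continuous (fun x : ℝ => ((Real.sin (2*π*n/Λ*x) : ℝ) : ℂ) * Complex.I) :=
        (Complex.continuous_ofReal.comp (husin.continuous)).mul continuous_const
      have hsplit : (∫ x in (0:ℝ)..Λ, fourier n (x : AddCircle Λ) * (F x : ℂ))
          = (∫ x in (0:ℝ)..Λ, ((Real.cos (2*π*n/Λ*x) : ℝ) : ℂ) * (F x : ℂ))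
            + (∫ x in (0:ℝ)..Λ, (((Real.sin (2*π*n/Λ*x) : ℝ) : ℂ) * Complex.I) * (F x : ℂ)) := by
        rw [← intervalIntegral.integral_add (mulii _ hc1) (mulii _ hc2)]
        apply intervalIntegral.integral_congr
        intro x _
        simp only [hexp]; ring
      rw [hsplit, hC _ hucos hpcos]
      have : (∫ x in (0:ℝ)..Λ, (((Real.sin (2*π*n/Λ*x) : ℝ) : ℂ) * Complex.I) * (F x : ℂ))
          = (∫ x in (0:ℝ)..Λ, ((Real.sin (2*π*n/Λ*x) : ℝ) : ℂ) * (F x : ℂ)) * Complex.I := by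
        rw [← intervalIntegral.integral_mul_const]
        apply intervalIntegral.integral_congr
        intro x _; ring
      rw [this, hC _ husin hpsin]
      simp
    have hLc0 : ∀ ψ : C(AddCircle Λ, ℂ), Lc ψ = 0 := by
      intro ψ
      have hspanle : Submodule.span ℂ (Set.range (@fourier Λ)) ≤ LinearMap.ker (Lc : C(AddCircle Λ, ℂ) →ₗ[ℂ] ℂ) := by
        rw [Submodule.span_le]
        rintro _ ⟨n, rfl⟩
        exact LinearMap.mem_ker.mpr (hfour n)
      have hker : (Submodule.span ℂ (Set.range (@fourier Λ))).topologicalClosure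
          ≤ LinearMap.ker (Lc : C(AddCircle Λ, ℂ) →ₗ[ℂ] ℂ) :=
        Submodule.topologicalClosure_minimal _ hspanle (ContinuousLinearMap.isClosed_ker Lc)
      rw [span_fourier_closure_eq_top] at hker
      exact LinearMap.mem_ker.mp (hker Submodule.mem_top)
    intro φ hφc hφp
    have hφ0Λ : φ Λ = φ 0 := by
      have := hφp 0; rwa [zero_add] at this
    have hφΛ : (fun x : ℝ => ((φ x : ℝ) : ℂ)) 0 = (fun x : ℝ => ((φ x : ℝ) : ℂ)) (0 + Λ) := by
      simp only [zero_add]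
      exact congrArg _ hφ0Λ.symm
    let ψ : C(AddCircle Λ, ℂ) :=
      ⟨AddCircle.liftIco Λ 0 (fun x => ((φ x : ℝ) : ℂ)),
        AddCircle.liftIco_continuous hφΛ ((Complex.continuous_ofReal.comp hφc).continuousOn)⟩
    have hψval : ∀ x ∈ Icc (0:ℝ) Λ, ψ (x : AddCircle Λ) = ((φ x : ℝ) : ℂ) := by
      intro x hx
      rcases lt_or_eq_of_le hx.2 with hlt | heq
      · show AddCircle.liftIco Λ 0 (fun y => ((φ y : ℝ) : ℂ)) (x : AddCircle Λ) = _
        exact AddCircle.liftIco_zero_coe_apply ⟨hx.1, hlt⟩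
      · rw [heq]
        have hΛ0 : ((Λ : ℝ) : AddCircle Λ) = (((0:ℝ)) : AddCircle Λ) := by
          rw [QuotientAddGroup.mk_zero, AddCircle.coe_period]
        show ψ ((Λ : ℝ) : AddCircle Λ) = _
        rw [hΛ0]
        have h0 : ψ (((0:ℝ)) : AddCircle Λ) = ((φ 0 : ℝ) : ℂ) := by
          show AddCircle.liftIco Λ 0 (fun y => ((φ y : ℝ) : ℂ)) ((0:ℝ) : AddCircle Λ) = _
          exact AddCircle.liftIco_zero_coe_apply ⟨le_refl _, hΛ⟩
        rw [h0, hφ0Λ]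
    have hval : Lc ψ = ((∫ x in (0:ℝ)..Λ, φ x * F x : ℝ) : ℂ) := by
      show (∫ x in (0:ℝ)..Λ, ψ (x : AddCircle Λ) * (F x : ℂ)) = _
      rw [← ofRealInt]
      apply intervalIntegral.integral_congr
      intro x hx
      simp only []
      rw [hψval x (by rwa [uIcc_of_le hΛ.le] at hx)]
    have h0 := hLc0 ψ
    rw [hval] at h0
    exact_mod_cast h0

  -- Step B
  have stepB : ∀ g : ℝ → ℝ, ContDiff ℝ (⊤ : ℕ∞) g → HasCompactSupport g →
      tsupport g ⊆ Ioo 0 Λ → ∫ x : ℝ, g x • F x = 0 := by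
    intro g hg hgc hgsub
    have hg0 : g 0 = 0 :=
      image_eq_zero_of_notMem_tsupport (fun hmem => (lt_irrefl (0:ℝ) (hgsub hmem).1))
    have hgΛ : g Λ = 0 :=
      image_eq_zero_of_notMem_tsupport (fun hmem => (lt_irrefl Λ (hgsub hmem).2))
    -- periodization via AddCircle
    have hgper : g 0 = g (0 + Λ) := by rw [zero_add, hg0, hgΛ]
    set G : ℝ → ℝ := fun x => AddCircle.liftIco Λ 0 g (x : AddCircle Λ) with hG
    have hGcont : Continuous G :=
      (AddCircle.liftIco_continuous hgper (hg.continuous.continuousOn)).comp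
        (AddCircle.continuous_mk' Λ)
    have hGper : Function.Periodic G Λ := by
      intro x
      simp only [hG]
      congr 1
      exact AddCircle.coe_add_period Λ x
    have hGeq : ∀ x ∈ Icc (0:ℝ) Λ, G x = g x := by
      intro x hx
      rcases lt_or_eq_of_le hx.2 with hlt | heq
      · exact AddCircle.liftIco_zero_coe_apply ⟨hx.1, hlt⟩
      · rw [heq, hgΛ, hG]
        show AddCircle.liftIco Λ 0 g ((Λ:ℝ) : AddCircle Λ) = 0
        rw [AddCircle.coe_period, ← QuotientAddGroup.mk_zero]
        rw [AddCircle.liftIco_zero_coe_apply ⟨le_refl _, hΛ⟩]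
        exact hg0
    -- reduce the global integral to the interval
    have hred : ∫ x : ℝ, g x • F x = ∫ x in (0:ℝ)..Λ, g x * F x := by
      rw [intervalIntegral.integral_of_le hΛ.le,
        ← setIntegral_eq_integral_of_forall_compl_eq_zero
          (s := Ioc (0:ℝ) Λ) (fun x hx => ?_)]
      · rfl
      · have : g x = 0 := by
          apply image_eq_zero_of_notMem_tsupport
          intro hmem
          exact hx (Ioo_subset_Ioc_self (hgsub hmem))
        simp [this]
    rw [hred]
    have : ∫ x in (0:ℝ)..Λ, g x * F x = ∫ x in (0:ℝ)..Λ, G x * F x := by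
      apply intervalIntegral.integral_congr
      intro x hx
      show g x * F x = G x * F x
      rw [hGeq x (by rwa [uIcc_of_le hΛ.le] at hx)]
    rw [this]
    exact stepA G hGcont hGper
  -- Step C : localize, then spread by periodicity
  have haeIoo : ∀ᵐ x : ℝ, x ∈ Ioo (0:ℝ) Λ → F x = 0 := by
    refine isOpen_Ioo.ae_eq_zero_of_integral_contDiff_smul_eq_zero
      (hF.locallyIntegrableOn _) ?_
    intro g hg hgs hgsub
    exact stepB g hg hgs hgsub
  rw [ae_iff] at haeIoo ⊢
  set N : Set ℝ := toMeasurable volume {x | ¬(x ∈ Ioo (0:ℝ) Λ → F x = 0)} with hN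
  have hNmeas : MeasurableSet N := measurableSet_toMeasurable _ _
  have hNnull : volume N = 0 := by
    rw [hN, measure_toMeasurable]; exact haeIoo
  have hsub : {x : ℝ | ¬F x = 0} ⊆ ⋃ n : ℤ, (fun x : ℝ => x - (n : ℝ) * Λ) ⁻¹' (N ∪ {0}) := by
    intro x hx
    have hx' : F x ≠ 0 := hx
    set n : ℤ := ⌊x / Λ⌋ with hn
    refine mem_iUnion.mpr ⟨n, ?_⟩
    have h1 : (n : ℝ) * Λ ≤ x := by
      rw [← le_div_iff₀ hΛ]
      exact Int.floor_le _
    have h2 : x < (n : ℝ) * Λ + Λ := by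
      have h2' : x / Λ < (n : ℝ) + 1 := by
        rw [hn]
        push_cast
        exact Int.lt_floor_add_one _
      have := (div_lt_iff₀ hΛ).mp h2'
      nlinarith
    have hFt : F (x - (n : ℝ) * Λ) = F x := hFper.sub_int_mul_eq n
    rw [mem_preimage]
    rcases eq_or_lt_of_le h1 with heq | hlt
    · exact mem_union_right _ (by simp [← heq])
    · refine mem_union_left _ (subset_toMeasurable _ _ ?_)
      intro hcon
      have hmem : x - (n : ℝ) * Λ ∈ Ioo (0:ℝ) Λ := ⟨by linarith, by linarith⟩
      exact hx' (hFt ▸ hcon hmem)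
  refine measure_mono_null hsub (measure_iUnion_null ?_)
  intro n
  have hmp : MeasurePreserving (fun x : ℝ => x - (n:ℝ)*Λ) volume volume :=
    measurePreserving_sub_right volume _
  rw [hmp.measure_preimage (hNmeas.union (measurableSet_singleton 0)).nullMeasurableSet]
  exact measure_union_null hNnull (by simp)

/-- **A varifold whose generalized mean curvature does not point in the normal
direction.** Let `ρ : ℝ → ℝ` be smooth, `Λ`-periodic and positive, and suppose the
locally integrable `Λ`-periodic `H : ℝ → ℝ²` satisfies the first-variation identity
`∫₀^Λ ξ₁'(x) ρ(x) dx = -∫₀^Λ ⟨H(x), ξ(x)⟩ ρ(x) dx` for all smooth `Λ`-periodic `ξ`.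
Then `H = (ρ'/ρ)·e₁` a.e.; in particular `⟨H, e₂⟩ = 0` a.e., and if `ρ` is not constant
then `H` does not vanish almost everywhere. -/
theorem meanCurvature_not_normal_example
    (Λ : ℝ) (hΛ : 0 < Λ) (ρ : ℝ → ℝ) (hρ : ContDiff ℝ (⊤ : ℕ∞) ρ)
    (hρper : Function.Periodic ρ Λ) (hρpos : ∀ x, 0 < ρ x)
    (H : ℝ → ℝ × ℝ) (hHloc : LocallyIntegrable H volume)
    (hHper : Function.Periodic H Λ)
    (hvar : ∀ ξ : ℝ → ℝ × ℝ, ContDiff ℝ (⊤ : ℕ∞) ξ → Function.Periodic ξ Λ →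
      ∫ x in (0 : ℝ)..Λ, deriv (fun y => (ξ y).1) x * ρ x
        = -∫ x in (0 : ℝ)..Λ, ((H x).1 * (ξ x).1 + (H x).2 * (ξ x).2) * ρ x) :
    (∀ᵐ x : ℝ, H x = (deriv ρ x / ρ x, 0)) ∧
    (∀ᵐ x : ℝ, (H x).2 = 0) ∧
    ((¬ ∃ c : ℝ, ∀ x, ρ x = c) → ¬ (∀ᵐ x : ℝ, H x = 0)) := by
  have hρc : Continuous ρ := hρ.continuous
  have hρ' : Continuous (deriv ρ) := hρ.continuous_deriv (by simp)
  have hderivper : Function.Periodic (deriv ρ) Λ := by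
    intro x
    have hfun : (fun y => ρ (y + Λ)) = ρ := funext fun y => hρper y
    calc deriv ρ (x + Λ) = deriv (fun y => ρ (y + Λ)) x := (deriv_comp_add_const ρ Λ x).symm
      _ = deriv ρ x := by rw [hfun]
  set F₁ : ℝ → ℝ := fun x => ρ x * (H x).1 - deriv ρ x with hF₁
  set F₂ : ℝ → ℝ := fun x => ρ x * (H x).2 with hF₂
  have hF₁loc : LocallyIntegrable F₁ volume := by
    rw [locallyIntegrable_iff]
    intro K hK
    have h1 : IntegrableOn (fun x => (H x).1) K volume := (hHloc.integrableOn_isCompact hK).fst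
    have h2 : IntegrableOn (fun x => ρ x * (H x).1) K volume :=
      IntegrableOn.continuousOn_mul hρc.continuousOn h1 hK
    exact h2.sub (hρ'.continuousOn.integrableOn_compact hK)
  have hF₂loc : LocallyIntegrable F₂ volume := by
    rw [locallyIntegrable_iff]
    intro K hK
    have h1 : IntegrableOn (fun x => (H x).2) K volume := (hHloc.integrableOn_isCompact hK).snd
    exact IntegrableOn.continuousOn_mul hρc.continuousOn h1 hK
  have hF₁per : Function.Periodic F₁ Λ := by
    intro x; simp only [hF₁]; rw [hρper x, hderivper x, hHper x]
  have hF₂per : Function.Periodic F₂ Λ := by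
    intro x; simp only [hF₂]; rw [hρper x, hHper x]
  have hkey1 : ∀ φ : ℝ → ℝ, ContDiff ℝ (⊤ : ℕ∞) φ → Function.Periodic φ Λ →
      ∫ x in (0:ℝ)..Λ, φ x * F₁ x = 0 := by
    intro φ hφ hφper
    have hφc : Continuous φ := hφ.continuous
    have hφ' : Continuous (deriv φ) := hφ.continuous_deriv (by simp)
    have iiH1 : IntervalIntegrable (fun x => φ x * (ρ x * (H x).1)) volume 0 Λ := by
      have h1 : IntegrableOn (fun x => (H x).1) (Icc (0:ℝ) Λ) volume :=
        (hHloc.integrableOn_isCompact isCompact_Icc).fst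
      have h2 := IntegrableOn.continuousOn_mul ((hφc.mul hρc).continuousOn) h1 isCompact_Icc
      refine (intervalIntegrable_iff_integrableOn_Ioc_of_le hΛ.le).mpr
        ((h2.mono_set Ioc_subset_Icc_self).congr_fun ?_ measurableSet_Ioc)
      intro x _
      simp only [Pi.mul_apply]
      ring
    have hξ := hvar (fun y => (φ y, (0:ℝ))) (hφ.prodMk contDiff_const)
      (fun x => by simp [hφper x])
    simp only [mul_zero, add_zero] at hξ
    have hibp : ∫ x in (0:ℝ)..Λ, (deriv φ x * ρ x + φ x * deriv ρ x) = 0 := by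
      rw [intervalIntegral.integral_deriv_mul_eq_sub
        (fun x _ => ((hφ.differentiable (by simp)) x).hasDerivAt)
        (fun x _ => ((hρ.differentiable (by simp)) x).hasDerivAt)
        (hφ'.intervalIntegrable _ _) (hρ'.intervalIntegrable _ _)]
      have hφΛ : φ Λ = φ 0 := by have := hφper 0; rwa [zero_add] at this
      have hρΛ : ρ Λ = ρ 0 := by have := hρper 0; rwa [zero_add] at this
      rw [hφΛ, hρΛ]; ring
    have hsplit : (∫ x in (0:ℝ)..Λ, deriv φ x * ρ x)
        + (∫ x in (0:ℝ)..Λ, φ x * deriv ρ x) = 0 := by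
      rw [← intervalIntegral.integral_add (f := fun x => deriv φ x * ρ x)
        (g := fun x => φ x * deriv ρ x) ((hφ'.mul hρc).intervalIntegrable _ _)
        ((hφc.mul hρ').intervalIntegrable _ _)]
      exact hibp
    have hrhs : (∫ x in (0:ℝ)..Λ, ((H x).1 * φ x) * ρ x)
        = ∫ x in (0:ℝ)..Λ, φ x * (ρ x * (H x).1) := by
      apply intervalIntegral.integral_congr
      intro x _
      dsimp only
      ring
    have hdiff : ∫ x in (0:ℝ)..Λ, φ x * F₁ x
        = (∫ x in (0:ℝ)..Λ, φ x * (ρ x * (H x).1))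
          - ∫ x in (0:ℝ)..Λ, φ x * deriv ρ x := by
      rw [← intervalIntegral.integral_sub (g := fun x => φ x * deriv ρ x) iiH1 ((hφc.mul hρ').intervalIntegrable _ _)]
      apply intervalIntegral.integral_congr
      intro x _
      simp only [hF₁]
      ring
    rw [hdiff]
    have hL : deriv (fun y => ((φ y, (0:ℝ)) : ℝ × ℝ).1) = deriv φ := by
      congr 1
    rw [hL] at hξ
    linarith [hξ, hsplit, hrhs]
  have hkey2 : ∀ φ : ℝ → ℝ, ContDiff ℝ (⊤ : ℕ∞) φ → Function.Periodic φ Λ →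
      ∫ x in (0:ℝ)..Λ, φ x * F₂ x = 0 := by
    intro φ hφ hφper
    have hξ := hvar (fun y => ((0:ℝ), φ y)) (contDiff_const.prodMk hφ)
      (fun x => by simp [hφper x])
    simp only [mul_zero, zero_add, deriv_const', zero_mul,
      intervalIntegral.integral_zero, zero_eq_neg] at hξ
    rw [show (∫ x in (0:ℝ)..Λ, φ x * F₂ x)
        = ∫ x in (0:ℝ)..Λ, ((H x).2 * φ x) * ρ x from ?_]
    · exact hξ
    · apply intervalIntegral.integral_congr
      intro x _
      simp only [hF₂]
      ring
  have m1 : ∀ᵐ x : ℝ, F₁ x = 0 := aux_ae_zero hΛ hF₁loc hF₁per hkey1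
  have m2 : ∀ᵐ x : ℝ, F₂ x = 0 := aux_ae_zero hΛ hF₂loc hF₂per hkey2
  have part1 : ∀ᵐ x : ℝ, H x = (deriv ρ x / ρ x, 0) := by
    filter_upwards [m1, m2] with x h1 h2
    have hρx : ρ x ≠ 0 := (hρpos x).ne'
    simp only [hF₁] at h1
    simp only [hF₂] at h2
    have e1 : (H x).1 = deriv ρ x / ρ x := by
      rw [eq_div_iff hρx]
      linear_combination h1
    have e2 : (H x).2 = 0 := by
      rcases mul_eq_zero.mp h2 with h | h
      · exact absurd h hρx
      · exact h
    exact Prod.ext e1 e2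
  have part2 : ∀ᵐ x : ℝ, (H x).2 = 0 := part1.mono fun x hx => by rw [hx]
  refine ⟨part1, part2, ?_⟩
  intro hnc hae
  apply hnc
  refine ⟨ρ 0, fun x => ?_⟩
  have hd0 : ∀ᵐ x : ℝ, deriv ρ x = (fun _ : ℝ => (0:ℝ)) x := by
    filter_upwards [part1, hae] with x h1 h2
    rw [h2] at h1
    have h3 : deriv ρ x / ρ x = 0 := by
      have := congrArg Prod.fst h1
      simpa using this.symm
    rcases div_eq_zero_iff.mp h3 with h | h
    · exact h
    · exact absurd h (hρpos x).ne'
  have hzero : deriv ρ = fun _ => 0 :=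
    ((hρ'.ae_eq_iff_eq volume continuous_const).mp hd0)
  exact is_const_of_deriv_eq_zero (hρ.differentiable (by simp))
    (fun y => congrFun hzero y) x 0
end
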